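/- arXiv:1512.06438 — 3 statements merged into one kernel-verified Lean document; each statement's English description precedes it below -/
import Mathlib

section
/- Any 2^p-separated set contained in a subdiamond of diameter 2^q of D_{m,k} (with p ≤ q ≤ m) has cardinality at most k·(2k)^{q−p}. -/
open SimpleGraph

/-- One subdivision step: replace each edge of `G` by internally disjoint
paths of length 2 indexed by `ι`. -/
def diamondStep {V : Type} (ι : Type) (G : SimpleGraph V) :
    SimpleGraph (V ⊕ (G.edgeSet × ι)) where
  Adj x y :=
    match x, y with
    | Sum.inl u, Sum.inr e => u ∈ (e.1 : Sym2 V)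
    | Sum.inr e, Sum.inl u => u ∈ (e.1 : Sym2 V)
    | _, _ => False
  symm := ⟨by rintro (u | e) (v | f) h <;> simp_all⟩
  loopless := ⟨by rintro (u | e) h <;> simp_all⟩

/-- The diamond graphs `D_{n,k}` with branch index type `ι` (take `ι = Fin k`
for branching `k` and `ι = ℕ` for infinite branching). -/
def Diamond (ι : Type) : (n : ℕ) → Σ V : Type, SimpleGraph V
  | 0 => ⟨Bool, ⊤⟩
  | n + 1 => ⟨_, diamondStep ι (Diamond ι n).2⟩

/-- Vertex set of the diamond graph. -/
abbrev diamV (ι : Type) (n : ℕ) : Type := (Diamond ι n).1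

/-- The diamond graph as a `SimpleGraph`. -/
abbrev diamG (ι : Type) (n : ℕ) : SimpleGraph (diamV ι n) := (Diamond ι n).2

/-- The two original vertices: `diamOrig ι n false` is the bottom,
`diamOrig ι n true` is the top of `D_{n,k}`. -/
def diamOrig (ι : Type) : (n : ℕ) → Bool → diamV ι n
  | 0, b => b
  | n + 1, b => Sum.inl (diamOrig ι n b)

/-- The bottom vertex of the diamond. -/
def diamBottom (ι : Type) (n : ℕ) : diamV ι n := diamOrig ι n false

/-- The top vertex of the diamond. -/
def diamTop (ι : Type) (n : ℕ) : diamV ι n := diamOrig ι n true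

/-- The canonical injection of `D_{n,k}` into `D_{n+j,k}`: each vertex is sent to
the vertex it evolves into. -/
def diamLift (ι : Type) (n : ℕ) : (j : ℕ) → diamV ι n → diamV ι (n + j)
  | 0, x => x
  | j + 1, x => Sum.inl (diamLift ι n j x)

/-- The complete binary tree of depth `n`: vertices are binary strings of
length `≤ n`. -/
def treeV (n : ℕ) : Type := {l : List Bool // l.length ≤ n}

/-- The graph structure of the binary tree `T_n`: a vertex is adjacent to its
one-letter extensions. -/
def treeG (n : ℕ) : SimpleGraph (treeV n) where
  Adj u v := (∃ b, v.1 = b :: u.1) ∨ (∃ b, u.1 = b :: v.1)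
  symm := by tauto
  loopless := ⟨by
    rintro ⟨l, hl⟩ (⟨b, hb⟩ | ⟨b, hb⟩) <;>
      simpa using congrArg List.length hb⟩

/-- The root of the binary tree. -/
def treeRoot (n : ℕ) : treeV n := ⟨[], by simp⟩

/-- The midpoint vertex of one of the `k` paths of length 2 replacing the edge
`uv` at the next construction step. -/
def diamMid (ι : Type) {j : ℕ} {u v : diamV ι j} (h : (diamG ι j).Adj u v) (i : ι) :
    diamV ι (j + 1) :=
  Sum.inr (⟨s(u, v), (diamG ι j).mem_edgeSet.mpr h⟩, i)

lemma diamMid_adj_left (ι : Type) {j : ℕ} {u v : diamV ι j}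
    (h : (diamG ι j).Adj u v) (i : ι) :
    (diamG ι (j + 1)).Adj (Sum.inl u) (diamMid ι h i) := by
  show u ∈ (s(u,v) : Sym2 (diamV ι j))
  exact Sym2.mem_mk_left u v

lemma diamMid_adj_right (ι : Type) {j : ℕ} {u v : diamV ι j}
    (h : (diamG ι j).Adj u v) (i : ι) :
    (diamG ι (j + 1)).Adj (diamMid ι h i) (Sum.inl v) := by
  show v ∈ (s(u,v) : Sym2 (diamV ι j))
  exact Sym2.mem_mk_right u v

/-- The graph homomorphism of `D_{q,k}` onto the subdiamond of `D_{j+q,k}` that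
evolved from the edge `uv` of `D_{j,k}`. Its range is that subdiamond. -/
def subEmbed (ι : Type) {j : ℕ} {u v : diamV ι j} (h : (diamG ι j).Adj u v) :
    (q : ℕ) → (diamG ι q) →g (diamG ι (j + q))
  | 0 =>
    ⟨fun b => bif b then u else v, by
      rintro a b hab
      have hab' : a ≠ b := hab
      cases a <;> cases b
      · exact absurd rfl hab'
      · exact h.symm
      · exact h
      · exact absurd rfl hab'⟩
  | q + 1 =>
    let f := subEmbed ι h q
    ⟨Sum.map f (fun p => (f.mapEdgeSet p.1, p.2)), by
      rintro (a | e) (b | e') hab <;> try exact hab.elim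
      · show f a ∈ (Sym2.map f e'.1.1 : Sym2 (diamV ι (j + q)))
        exact Sym2.mem_map.mpr ⟨_, hab, rfl⟩
      · show f b ∈ (Sym2.map f e.1.1 : Sym2 (diamV ι (j + q)))
        exact Sym2.mem_map.mpr ⟨_, hab, rfl⟩⟩

/-!
A graph homomorphism does not increase distances, so a separated set in a subdiamond pulls
back to an equally separated set in `D_q` with its own metric.

`D_{n+1}` is covered by `2k` copies of `D_n`: the subdiamonds grown from the edges of `D_1`
joining one of the two endpoints to one of the `k` centers. This gives the factor `2k` for
each level above the scale `2^p`. At the scale of the diameter, every vertex of `D_{n+1}`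
other than the two endpoints is at distance `< 2^n` from some center, while each center is
at distance `2^n` from both endpoints. So a `2^{n+1}`-separated set either consists of
endpoints only, or contains no endpoint and at most one point near each center; in both
cases it has at most `k` points.
-/

namespace SimpleGraph

variable {V W : Type} {G : SimpleGraph V} {H : SimpleGraph W}

lemma edist_map_le (f : G →g H) (a b : V) : H.edist (f a) (f b) ≤ G.edist a b := by
  rcases eq_or_ne (G.edist a b) ⊤ with hab | hab
  · exact hab ▸ le_top
  obtain ⟨w, hw⟩ := exists_walk_of_edist_ne_top hab
  simpa [hw] using edist_le (w.map f)

lemma natCast_le_edist_of_le_dist {n : ℕ} {a b : V} (h : n ≤ G.dist a b) :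
    (n : ℕ∞) ≤ G.edist a b :=
  (Nat.cast_le.mpr h).trans (ENat.natCast_toNat_le_self _)

lemma ncard_le_of_subset_range {f : G →g H} {r : ℕ∞} {N : ℕ}
    (hG : ∀ T : Set V, T.Pairwise (fun x y => r ≤ G.edist x y) → T.ncard ≤ N)
    {S : Set W} (hS : S ⊆ Set.range f) (hsep : S.Pairwise fun x y => r ≤ H.edist x y) :
    S.ncard ≤ N := by
  obtain ⟨T, rfl, hinj⟩ := Set.exists_image_eq_injOn_of_subset_range hS
  rw [hinj.ncard_image]
  refine hG T fun x hx y hy hxy => ?_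
  exact (hsep (Set.mem_image_of_mem f hx) (Set.mem_image_of_mem f hy)
    (hinj.ne hx hy hxy)).trans (edist_map_le f x y)

lemma edist_lt_two_pow_succ {n : ℕ} {x c y : V} (hx : G.edist x c < 2 ^ n)
    (hy : G.edist c y ≤ 2 ^ n) : G.edist x y < 2 ^ (n + 1) := by
  refine (ENat.add_one_le_iff' (by simp)).mp ?_
  calc G.edist x y + 1 ≤ G.edist x c + 1 + G.edist c y := by
        rw [add_right_comm]
        gcongr
        exact G.edist_triangle
    _ ≤ 2 ^ n + 2 ^ n := add_le_add ((ENat.add_one_le_iff' (by simp)).mpr hx) hy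
    _ = 2 ^ (n + 1) := by ring

end SimpleGraph

section diamondStep

variable {ι V W : Type} {G : SimpleGraph V} {H : SimpleGraph W}

def diamondStepMap (f : G →g H) : diamondStep ι G →g diamondStep ι H where
  toFun := Sum.map f fun p => (f.mapEdgeSet p.1, p.2)
  map_rel' := by
    rintro (a | e) (b | e') hab <;> try exact hab.elim
    · exact Sym2.mem_map.mpr ⟨_, hab, rfl⟩
    · exact Sym2.mem_map.mpr ⟨_, hab, rfl⟩

lemma diamondStep_adj_inl_inr {e : G.edgeSet} {a : V} (ha : a ∈ (e : Sym2 V)) (i : ι) :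
    (diamondStep ι G).Adj (Sum.inl a) (Sum.inr (e, i)) := ha

lemma diamondStep_edist_inl_le_two [Nonempty ι] {a b : V} (hab : G.Adj a b) :
    (diamondStep ι G).edist (Sum.inl a) (Sum.inl b) ≤ 2 := by
  let m : V ⊕ (G.edgeSet × ι) := Sum.inr (⟨s(a, b), hab⟩, Classical.arbitrary ι)
  calc (diamondStep ι G).edist (Sum.inl a) (Sum.inl b)
      ≤ (diamondStep ι G).edist (Sum.inl a) m + (diamondStep ι G).edist m (Sum.inl b) :=
        SimpleGraph.edist_triangle
    _ ≤ 1 + 1 := by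
        gcongr
        · exact SimpleGraph.edist_le_one_iff_adj_or_eq.mpr
            (.inl (diamondStep_adj_inl_inr (Sym2.mem_mk_left a b) _))
        · exact SimpleGraph.edist_le_one_iff_adj_or_eq.mpr
            (.inl (diamondStep_adj_inl_inr (Sym2.mem_mk_right a b) _).symm)
    _ = 2 := by norm_num

lemma diamondStep_edist_inl_le [Nonempty ι] (a b : V) :
    (diamondStep ι G).edist (Sum.inl a) (Sum.inl b) ≤ 2 * G.edist a b := by
  rcases eq_or_ne (G.edist a b) ⊤ with hab | hab
  · simp [hab]
  obtain ⟨w, hw⟩ := SimpleGraph.exists_walk_of_edist_ne_top hab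
  rw [← hw]
  clear hw hab
  induction w with
  | nil => simp
  | @cons a c b hac w ih =>
    calc (diamondStep ι G).edist (Sum.inl a) (Sum.inl b)
        ≤ (diamondStep ι G).edist (Sum.inl a) (Sum.inl c)
          + (diamondStep ι G).edist (Sum.inl c) (Sum.inl b) := SimpleGraph.edist_triangle
      _ ≤ 2 + 2 * w.length := add_le_add (diamondStep_edist_inl_le_two hac) ih
      _ = 2 * (w.cons hac).length := by simp; ring

def JointlyCover {C : Type} (f : C → G →g H) : Prop :=
  (∀ y, ∃ c x, f c x = y) ∧
    ∀ a b, H.Adj a b → ∃ c x y, G.Adj x y ∧ f c x = a ∧ f c y = b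

lemma diamondStepMap_inr_eq (f : G →g H) {x y : V} (hxy : G.Adj x y) (i : ι)
    {e : H.edgeSet} (he : (e : Sym2 W) = s(f x, f y)) :
    diamondStepMap f (Sum.inr (⟨s(x, y), hxy⟩, i)) = Sum.inr (e, i) :=
  congrArg (fun e => Sum.inr (e, i)) (Subtype.ext he.symm)

lemma jointlyCover_diamondStepMap {C : Type} {f : C → G →g H} (hf : JointlyCover f) :
    JointlyCover fun c => diamondStepMap (ι := ι) (f c) := by
  obtain ⟨hV, hE⟩ := hf
  have hmid : ∀ (e : H.edgeSet) (a : W), a ∈ (e : Sym2 W) →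
      ∃ c x y, ∃ hxy : G.Adj x y, f c x = a ∧
        ∀ i : ι, diamondStepMap (f c) (Sum.inr (⟨s(x, y), hxy⟩, i)) = Sum.inr (e, i) := by
    intro e a ha
    obtain ⟨b, hb⟩ := Sym2.mem_iff_exists.mp ha
    obtain ⟨c, x, y, hxy, rfl, rfl⟩ := hE a b (by simpa [hb] using e.2)
    exact ⟨c, x, y, hxy, rfl, fun i => diamondStepMap_inr_eq _ hxy i hb⟩
  have hedge : ∀ a (e : H.edgeSet) (i : ι), a ∈ (e : Sym2 W) → ∃ c x y,
      (diamondStep ι G).Adj x y ∧ diamondStepMap (f c) x = Sum.inl a ∧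
        diamondStepMap (f c) y = Sum.inr (e, i) := by
    intro a e i ha
    obtain ⟨c, x, y, hxy, rfl, he⟩ := hmid e a ha
    exact ⟨c, Sum.inl x, _, diamondStep_adj_inl_inr (Sym2.mem_mk_left x y) i, rfl, he i⟩
  refine ⟨?_, ?_⟩
  · rintro (y | ⟨e, i⟩)
    · obtain ⟨c, x, rfl⟩ := hV y
      exact ⟨c, Sum.inl x, rfl⟩
    · obtain ⟨c, _, _, _, -, he⟩ := hmid e _ (Sym2.out_fst_mem e.1)
      exact ⟨c, _, he i⟩
  · rintro (a | ⟨e, i⟩) (b | ⟨e', i'⟩) hab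
    · exact hab.elim
    · exact hedge a e' i' hab
    · obtain ⟨c, x, y, hxy, hx, hy⟩ := hedge b e i hab
      exact ⟨c, y, x, hxy.symm, hy, hx⟩
    · exact hab.elim

end diamondStep

section Diamond

variable {ι : Type}

lemma diamG_zero_adj : (diamG ι 0).Adj false true :=
  (top_adj false true).mpr Bool.false_ne_true

instance : Subsingleton (diamG ι 0).edgeSet where
  allEq := by
    rintro ⟨e, he⟩ ⟨e', he'⟩
    congr 1
    induction e using Sym2.ind with | _ a b => ?_
    induction e' using Sym2.ind with | _ a' b' => ?_
    have hab : a ≠ b := (top_adj a b).mp he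
    have hab' : a' ≠ b' := (top_adj a' b').mp he'
    cases a <;> cases b <;> cases a' <;> cases b' <;>
      first | rfl | exact Sym2.eq_swap | exact absurd rfl hab | exact absurd rfl hab'

/-- The midpoint of the `i`-th path of length 2 created at the first subdivision step,
as a vertex of `D_{n+1}`. -/
def diamCenter (i : ι) : (n : ℕ) → diamV ι (n + 1)
  | 0 => diamMid ι diamG_zero_adj i
  | n + 1 => Sum.inl (diamCenter i n)

lemma diamCenter_zero_adj (i : ι) (b : Bool) :
    (diamG ι 1).Adj (Sum.inl b) (diamCenter i 0) := by
  cases b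
  · exact diamMid_adj_left ι diamG_zero_adj i
  · exact (diamMid_adj_right ι diamG_zero_adj i).symm

lemma diamCenter_zero_eq (e : (diamG ι 0).edgeSet) (i : ι) :
    diamCenter i 0 = Sum.inr (e, i) :=
  congrArg (fun e => Sum.inr (e, i)) (Subsingleton.elim _ _)

lemma edist_diamCenter_diamOrig_le [Nonempty ι] (i : ι) (b : Bool) :
    ∀ n, (diamG ι (n + 1)).edist (diamCenter i n) (diamOrig ι (n + 1) b) ≤ 2 ^ n
  | 0 => by
    rw [pow_zero]
    exact SimpleGraph.edist_le_one_iff_adj_or_eq.mpr (.inl (diamCenter_zero_adj i b).symm)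
  | n + 1 => (diamondStep_edist_inl_le _ _).trans <| by
    rw [pow_succ']
    gcongr
    exact edist_diamCenter_diamOrig_le i b n

lemma exists_mem_notMem_range_diamOrig {n : ℕ} (e : (diamG ι (n + 1)).edgeSet) :
    ∃ z ∈ (e : Sym2 (diamV ι (n + 1))), z ∉ Set.range (diamOrig ι (n + 1)) := by
  obtain ⟨e, he⟩ := e
  induction e using Sym2.ind with
  | _ a b =>
  match a, b, he with
  | Sum.inl _, Sum.inl _, he => exact he.elim
  | Sum.inl _, Sum.inr _, _ => exact ⟨_, Sym2.mem_mk_right _ _, by rintro ⟨_, ⟨⟩⟩⟩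
  | Sum.inr _, _, _ => exact ⟨_, Sym2.mem_mk_left _ _, by rintro ⟨_, ⟨⟩⟩⟩

lemma exists_edist_diamCenter_lt [Nonempty ι] :
    ∀ (n : ℕ) (x : diamV ι (n + 1)), x ∉ Set.range (diamOrig ι (n + 1)) →
      ∃ i, (diamG ι (n + 1)).edist x (diamCenter i n) < 2 ^ n
  | 0, Sum.inl b, hx => (hx ⟨b, rfl⟩).elim
  | 0, Sum.inr (e, i), _ => ⟨i, by simp [← diamCenter_zero_eq e i]⟩
  | n + 1, Sum.inl y, hx => by
    obtain ⟨i, hi⟩ :=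
      exists_edist_diamCenter_lt n y fun ⟨b, hb⟩ => hx ⟨b, congrArg Sum.inl hb⟩
    refine ⟨i, (ENat.add_one_le_iff' (by simp)).mp ?_⟩
    have hi := (ENat.add_one_le_iff' (by simp)).mpr hi
    calc (diamG ι (n + 1 + 1)).edist (Sum.inl y) (Sum.inl (diamCenter i n)) + 1
        ≤ 2 * (diamG ι (n + 1)).edist y (diamCenter i n) + 2 := by
          gcongr
          · exact diamondStep_edist_inl_le _ _
          · norm_num
      _ = 2 * ((diamG ι (n + 1)).edist y (diamCenter i n) + 1) := by ring
      _ ≤ 2 ^ (n + 1) := by rw [pow_succ']; gcongr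
  | n + 1, Sum.inr (e, i'), _ => by
    obtain ⟨z, hze, hz⟩ := exists_mem_notMem_range_diamOrig e
    obtain ⟨i, hi⟩ := exists_edist_diamCenter_lt n z hz
    refine ⟨i, (ENat.add_one_le_iff' (by simp)).mp ?_⟩
    have hi := (ENat.add_one_le_iff' (by simp)).mpr hi
    calc (diamG ι (n + 1 + 1)).edist (Sum.inr (e, i')) (Sum.inl (diamCenter i n)) + 1
        ≤ (diamG ι (n + 1 + 1)).edist (Sum.inr (e, i')) (Sum.inl z)
          + (diamG ι (n + 1 + 1)).edist (Sum.inl z) (Sum.inl (diamCenter i n)) + 1 := by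
          gcongr
          exact SimpleGraph.edist_triangle
      _ ≤ 1 + 2 * (diamG ι (n + 1)).edist z (diamCenter i n) + 1 := by
          gcongr
          · exact SimpleGraph.edist_le_one_iff_adj_or_eq.mpr
              (.inl (diamondStep_adj_inl_inr hze i').symm)
          · exact diamondStep_edist_inl_le _ _
      _ = 2 * ((diamG ι (n + 1)).edist z (diamCenter i n) + 1) := by ring
      _ ≤ 2 ^ (n + 1) := by rw [pow_succ']; gcongr

lemma ncard_le_of_pairwise_two_pow_le_edist [Fintype ι] (hι : 2 ≤ Fintype.card ι) :
    ∀ {n : ℕ} {T : Set (diamV ι n)},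
      T.Pairwise (fun x y => 2 ^ n ≤ (diamG ι n).edist x y) → T.ncard ≤ Fintype.card ι
  | 0, T, _ => (Set.ncard_le_card (α := Bool) T).trans (by simpa using hι)
  | n + 1, T, hT => by
    have : Nonempty ι := Fintype.card_pos_iff.mp (by omega)
    by_cases hends : T ⊆ Set.range (diamOrig ι (n + 1))
    · calc T.ncard ≤ (Set.range (diamOrig ι (n + 1))).ncard :=
            Set.ncard_le_ncard hends (Set.finite_range _)
        _ ≤ Nat.card Bool := Finite.card_range_le _
        _ ≤ Fintype.card ι := by simpa using hι
    obtain ⟨x, hxT, hx⟩ := Set.not_subset.mp hends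
    have hT' : ∀ y ∈ T, y ∉ Set.range (diamOrig ι (n + 1)) := by
      rintro y hy ⟨b, rfl⟩
      obtain ⟨i, hi⟩ := exists_edist_diamCenter_lt n x hx
      exact (hT hxT hy fun hxb => hx ⟨b, hxb.symm⟩).not_gt
        (SimpleGraph.edist_lt_two_pow_succ hi (edist_diamCenter_diamOrig_le i b n))
    choose! g hg using fun y hy => exists_edist_diamCenter_lt n y (hT' y hy)
    calc T.ncard ≤ (Set.univ : Set ι).ncard := by
          refine Set.ncard_le_ncard_of_injOn g (fun _ _ => Set.mem_univ _) ?_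
          intro y hy y' hy' hgy
          by_contra hne
          refine (hT hy hy' hne).not_gt (SimpleGraph.edist_lt_two_pow_succ (hg y hy) ?_)
          rw [SimpleGraph.edist_comm, hgy]
          exact (hg y' hy').le
      _ = Fintype.card ι := by simp

/-- `diamPiece i b n` maps `D_n` onto the subdiamond of `D_{n+1}` that evolved from the
edge of `D_1` joining the endpoint `b` to the `i`-th center. -/
def diamPiece (i : ι) (b : Bool) : (n : ℕ) → diamG ι n →g diamG ι (n + 1)
  | 0 => subEmbed ι (diamCenter_zero_adj i b) 0
  | n + 1 => diamondStepMap (diamPiece i b n)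

lemma jointlyCover_diamPiece [Nonempty ι] :
    ∀ n, JointlyCover fun c : ι × Bool => diamPiece c.1 c.2 n
  | 0 => by
    refine ⟨?_, ?_⟩
    · rintro (b | ⟨e, i⟩)
      · exact ⟨(Classical.arbitrary ι, b), true, rfl⟩
      · exact ⟨(i, false), false, diamCenter_zero_eq e i⟩
    · rintro (b | ⟨e, i⟩) (b' | ⟨e', i'⟩) hab
      · exact hab.elim
      · exact ⟨(i', b), true, false, diamG_zero_adj.symm, rfl, diamCenter_zero_eq e' i'⟩
      · exact ⟨(i, b'), false, true, diamG_zero_adj, diamCenter_zero_eq e i, rfl⟩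
      · exact hab.elim
  | n + 1 => jointlyCover_diamondStepMap (jointlyCover_diamPiece n)

theorem ncard_le_of_pairwise_le_edist [Fintype ι] (hι : 2 ≤ Fintype.card ι) {p q : ℕ}
    (hpq : p ≤ q) {T : Set (diamV ι q)}
    (hT : T.Pairwise fun x y => 2 ^ p ≤ (diamG ι q).edist x y) :
    T.ncard ≤ Fintype.card ι * (2 * Fintype.card ι) ^ (q - p) := by
  have : Nonempty ι := Fintype.card_pos_iff.mp (by omega)
  induction q, hpq using Nat.le_induction with
  | base => simpa using ncard_le_of_pairwise_two_pow_le_edist hι hT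
  | succ n hpn ih =>
    have hT_eq : T = ⋃ c : ι × Bool, T ∩ Set.range (diamPiece c.1 c.2 n) := by
      rw [← Set.inter_iUnion, eq_comm, Set.inter_eq_left]
      exact fun x _ => Set.mem_iUnion.mpr ((jointlyCover_diamPiece n).1 x)
    calc T.ncard = (⋃ c : ι × Bool, T ∩ Set.range (diamPiece c.1 c.2 n)).ncard :=
          congrArg _ hT_eq
      _ ≤ ∑ c : ι × Bool, (T ∩ Set.range (diamPiece c.1 c.2 n)).ncard :=
          Set.ncard_iUnion_le_of_fintype _
      _ ≤ ∑ _c : ι × Bool, Fintype.card ι * (2 * Fintype.card ι) ^ (n - p) :=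
          Finset.sum_le_sum fun c _ => SimpleGraph.ncard_le_of_subset_range (fun _ => ih)
            Set.inter_subset_right (hT.mono Set.inter_subset_left)
      _ = Fintype.card ι * (2 * Fintype.card ι) ^ (n + 1 - p) := by
          rw [Finset.sum_const, Finset.card_univ, Fintype.card_prod, Fintype.card_bool,
            Nat.sub_add_comm hpn, pow_succ, smul_eq_mul]
          ring

end Diamond

theorem separated_set_in_subdiamond_card_le (k : ℕ) (hk : 2 ≤ k) {j q : ℕ}
    {u v : diamV (Fin k) j} (h : (diamG (Fin k) j).Adj u v)
    (p : ℕ) (hpq : p ≤ q) (S : Set (diamV (Fin k) (j + q)))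
    (hsub : S ⊆ Set.range (subEmbed (Fin k) h q))
    (hsep : ∀ x ∈ S, ∀ y ∈ S, x ≠ y → 2 ^ p ≤ (diamG (Fin k) (j + q)).dist x y) :
    Nat.card S ≤ k * (2 * k) ^ (q - p) := by
  have hk' : 2 ≤ Fintype.card (Fin k) := by simpa using hk
  rw [Nat.card_coe_set_eq]
  simpa using SimpleGraph.ncard_le_of_subset_range
    (fun _ => ncard_le_of_pairwise_le_edist hk' hpq) hsub fun x hx y hy hxy => by
      exact_mod_cast SimpleGraph.natCast_le_edist_of_le_dist (hsep x hx y hy hxy)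
end

section
/- A subdiamond of D_{m,k} of diameter 2^p contains at most k vertices of any 2^p-separated set. -/
open SimpleGraph

/-!
In `D_{n+1}` the `inl` vertices are those of `D_n` and the `inr` vertices are the new midpoints;
every edge joins the two kinds, so `D_{n+1}` is bipartite, and its diameter is at most `2^(n+1)`.
Hence a `2^(n+1)`-separated set, whose pairwise distances all equal the even number `2^(n+1)`,
lies entirely on one side. Distances between old vertices at most double from `D_n` to `D_{n+1}`,
so old vertices of a separated set form a `2^n`-separated set of `D_n`. New vertices are sent to
an old endpoint of their edge; this costs at most `2` in distance, and parity in `D_n` (for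
`n ≥ 1`) absorbs the loss. Induction on `n` ends at `D_0`, with `2 ≤ k` vertices, or at the `k`
midpoints of `D_1`.
-/

open Set Sum

namespace Diamond

variable {ι : Type}

lemma isLeft_ne_of_adj {n : ℕ} {x y : diamV ι (n + 1)} (h : (diamG ι (n + 1)).Adj x y) :
    x.isLeft ≠ y.isLeft := by
  rcases x with _ | _ <;> rcases y with _ | _ <;> first | exact h.elim | simp

lemma even_length_iff {n : ℕ} {x y : diamV ι (n + 1)} (W : (diamG ι (n + 1)).Walk x y) :
    Even W.length ↔ x.isLeft = y.isLeft := by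
  induction W with
  | nil => simp
  | cons h _ ih =>
    rw [Walk.length_cons, Nat.even_add_one, ih]
    have := isLeft_ne_of_adj h
    grind

lemma exists_inl_mem {n : ℕ} (e : (diamG ι (n + 1)).edgeSet) :
    ∃ a : diamV ι n, inl a ∈ (e : Sym2 (diamV ι (n + 1))) := by
  rcases e with ⟨⟨x, y⟩, h⟩
  rcases x with a | _ <;> rcases y with b | _
  · exact h.elim
  · exact ⟨a, Sym2.mem_mk_left _ _⟩
  · exact ⟨b, Sym2.mem_mk_right _ _⟩
  · exact h.elim

instance subsingleton_edgeSet_zero : Subsingleton (diamG ι 0).edgeSet := by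
  constructor
  rintro ⟨e, he⟩ ⟨e', he'⟩
  ext1
  revert e e'
  change ∀ e ∈ (⊤ : SimpleGraph Bool).edgeSet, ∀ e' ∈ (⊤ : SimpleGraph Bool).edgeSet,
    e = e'
  decide

def liftWalk {n : ℕ} (i : ι) {u v : diamV ι n} :
    (diamG ι n).Walk u v → (diamG ι (n + 1)).Walk (inl u) (inl v)
  | .nil => .nil
  | .cons h W => .cons (diamMid_adj_left ι h i) (.cons (diamMid_adj_right ι h i) (liftWalk i W))

@[simp]
lemma length_liftWalk {n : ℕ} (i : ι) {u v : diamV ι n} (W : (diamG ι n).Walk u v) :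
    (liftWalk i W).length = 2 * W.length := by
  induction W with
  | nil => rfl
  | cons h W ih =>
    change (liftWalk i W).length + 1 + 1 = 2 * (W.length + 1)
    rw [ih]; ring

def IsSeparated {n : ℕ} (S : Set (diamV ι n)) : Prop :=
  S.Pairwise fun x y => 2 ^ n ≤ (diamG ι n).dist x y

lemma isSeparated_image_of_pairwise {α : Type*} {n : ℕ} {f : α → diamV ι n} {T : Set α}
    (h : T.Pairwise fun p q => 2 ^ n ≤ (diamG ι n).dist (f p) (f q)) :
    InjOn f T ∧ IsSeparated (f '' T) := by
  have hinj : InjOn f T := fun p hp q hq hpq => by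
    by_contra hne
    have : 2 ^ n ≤ (diamG ι n).dist (f p) (f q) := h hp hq hne
    rw [hpq, SimpleGraph.dist_self] at this
    exact (Nat.one_le_two_pow.trans this).not_gt Nat.zero_lt_one
  exact ⟨hinj, hinj.pairwise_image.mpr h⟩

section

variable [Nonempty ι]

lemma exists_adj : ∀ {n : ℕ} (x : diamV ι n), ∃ y, (diamG ι n).Adj x y
  | 0, x => ⟨!x, show x ≠ !x from Bool.self_ne_not x⟩
  | n + 1, inl u =>
    let ⟨_, h⟩ := exists_adj u
    ⟨_, diamMid_adj_left ι h (Classical.arbitrary ι)⟩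
  | n + 1, inr (⟨e, he⟩, i) => by
    induction e using Sym2.ind with
    | _ a b => exact ⟨inl a, Sym2.mem_mk_left a b⟩

lemma connected : ∀ n, (diamG ι n).Connected
  | 0 => connected_top (V := Bool)
  | n + 1 => by
    have hinl (u : diamV ι n) : (diamG ι (n + 1)).Reachable (inl (diamBottom ι n)) (inl u) :=
      ⟨liftWalk (Classical.arbitrary ι) ((connected n).preconnected _ u).some⟩
    refine (connected_iff_exists_forall_reachable _).mpr ⟨inl (diamBottom ι n), ?_⟩
    rintro (u | ⟨⟨⟨a, b⟩, hab⟩, i⟩)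
    · exact hinl u
    · exact (hinl a).trans (Adj.reachable (Sym2.mem_mk_left a b))

lemma dist_inl_inl_le {n : ℕ} (u v : diamV ι n) :
    (diamG ι (n + 1)).dist (inl u) (inl v) ≤ 2 * (diamG ι n).dist u v := by
  obtain ⟨W, hW⟩ := (connected n).exists_walk_length_eq_dist u v
  simpa [hW] using dist_le (liftWalk (Classical.arbitrary ι) W)

lemma dist_inl_inr_le {n : ℕ} {a : diamV ι n} {e : (diamG ι n).edgeSet}
    (ha : a ∈ (e : Sym2 (diamV ι n))) (w : diamV ι n) (i : ι) :
    (diamG ι (n + 1)).dist (inl w) (inr (e, i)) ≤ 2 * (diamG ι n).dist w a + 1 :=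
  calc _ ≤ _ + _ := (connected (n + 1)).dist_triangle (v := inl a)
    _ ≤ 2 * (diamG ι n).dist w a + 1 :=
        add_le_add (dist_inl_inl_le w a) (dist_eq_one_iff_adj.mpr ha).le

lemma dist_inr_inr_le {n : ℕ} {a b : diamV ι n} {e e' : (diamG ι n).edgeSet}
    (ha : a ∈ (e : Sym2 (diamV ι n))) (hb : b ∈ (e' : Sym2 (diamV ι n))) (i i' : ι) :
    (diamG ι (n + 1)).dist (inr (e, i)) (inr (e', i')) ≤ 2 * (diamG ι n).dist a b + 2 :=
  calc _ ≤ _ + _ := (connected (n + 1)).dist_triangle (v := inl a)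
    _ ≤ 1 + (2 * (diamG ι n).dist a b + 1) :=
        add_le_add (dist_eq_one_iff_adj.mpr ha).le (dist_inl_inr_le hb a i')
    _ = 2 * (diamG ι n).dist a b + 2 := by ring

/-- The strengthening of the diameter bound `dist_le_two_pow` that survives the induction. -/
lemma dist_lt_two_pow_or_dist_lt_two_pow :
    ∀ {n : ℕ} (v : diamV ι n) {x y : diamV ι n}, (diamG ι n).Adj x y →
      (diamG ι n).dist v x < 2 ^ n ∨ (diamG ι n).dist v y < 2 ^ n
  | 0, v, x, y, h => by
    have : v = x ∨ v = y := by
      revert v x y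
      change ∀ v x y : Bool, x ≠ y → v = x ∨ v = y
      decide
    rcases this with rfl | rfl <;> simp
  | n + 1, v, x, y, h => by
    have hinl_inr (w : diamV ι n) (e : (diamG ι n).edgeSet) (i : ι) :
        (diamG ι (n + 1)).dist (inl w) (inr (e, i)) < 2 ^ (n + 1) := by
      obtain ⟨e, he⟩ := e
      induction e using Sym2.ind with | _ a b => ?_
      rcases dist_lt_two_pow_or_dist_lt_two_pow w ((diamG ι n).mem_edgeSet.mp he) with h | h
      · have := dist_inl_inr_le (e := ⟨_, he⟩) (Sym2.mem_mk_left a b) w i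
        rw [pow_succ]; omega
      · have := dist_inl_inr_le (e := ⟨_, he⟩) (Sym2.mem_mk_right a b) w i
        rw [pow_succ]; omega
    have hopposite (v x : diamV ι (n + 1)) (hvx : v.isLeft ≠ x.isLeft) :
        (diamG ι (n + 1)).dist v x < 2 ^ (n + 1) := by
      rcases v with w | ⟨e, i⟩ <;> rcases x with w' | ⟨e', i'⟩
      · simp at hvx
      · exact hinl_inr w e' i'
      · exact SimpleGraph.dist_comm.trans_lt (hinl_inr w' e i)
      · simp at hvx
    by_cases hvx : v.isLeft = x.isLeft
    · exact .inr (hopposite v y (hvx ▸ isLeft_ne_of_adj h))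
    · exact .inl (hopposite v x hvx)

lemma dist_le_two_pow {n : ℕ} (x y : diamV ι n) : (diamG ι n).dist x y ≤ 2 ^ n := by
  obtain ⟨z, hz⟩ := exists_adj y
  rcases dist_lt_two_pow_or_dist_lt_two_pow x hz with h | h
  · exact h.le
  · have := (connected n).dist_triangle (u := x) (v := z) (w := y)
    rw [SimpleGraph.dist_comm (u := z), dist_eq_one_iff_adj.mpr hz] at this
    omega

lemma even_dist_iff {n : ℕ} (x y : diamV ι (n + 1)) :
    Even ((diamG ι (n + 1)).dist x y) ↔ x.isLeft = y.isLeft := by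
  obtain ⟨W, hW⟩ := (connected (n + 1)).exists_walk_length_eq_dist x y
  rw [← hW, even_length_iff]

lemma two_pow_le_dist_inl_of_inr {m : ℕ} {e e' : (diamG ι (m + 1)).edgeSet} {a b : diamV ι m}
    (ha : inl a ∈ (e : Sym2 (diamV ι (m + 1)))) (hb : inl b ∈ (e' : Sym2 (diamV ι (m + 1))))
    {i i' : ι} (h : 2 ^ (m + 2) ≤ (diamG ι (m + 2)).dist (inr (e, i)) (inr (e', i'))) :
    2 ^ (m + 1) ≤ (diamG ι (m + 1)).dist (inl a) (inl b) := by
  -- `inl a` and `inl b` lie on the same side of `D_{m+1}`, so the loss of `2` is absorbed.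
  obtain ⟨c, hc⟩ := (even_dist_iff (inl a) (inl b)).mpr rfl
  have := h.trans (dist_inr_inr_le ha hb i i')
  have h₁ : 2 ^ (m + 1) = 2 * 2 ^ m := pow_succ' 2 m
  have h₂ : 2 ^ (m + 2) = 4 * 2 ^ m := by ring
  omega

lemma IsSeparated.of_image_inl {n : ℕ} {T : Set (diamV ι n)}
    (h : IsSeparated (inl '' T : Set (diamV ι (n + 1)))) : IsSeparated T := by
  intro u hu v hv huv
  have := (h (mem_image_of_mem _ hu) (mem_image_of_mem _ hv) (inl_injective.ne huv)).trans
    (dist_inl_inl_le u v)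
  rw [pow_succ] at this
  omega

lemma IsSeparated.subset_range_inl_or_subset_range_inr {n : ℕ} {S : Set (diamV ι (n + 1))}
    (hS : IsSeparated S) : S ⊆ range inl ∨ S ⊆ range inr := by
  have hsides : ∀ x ∈ S, ∀ y ∈ S, x.isLeft = y.isLeft := by
    intro x hx y hy
    rcases eq_or_ne x y with rfl | hxy
    · rfl
    rw [← even_dist_iff, le_antisymm (dist_le_two_pow x y) (hS hx hy hxy)]
    exact Nat.even_pow.mpr ⟨even_two, n.succ_ne_zero⟩
  by_contra! h
  obtain ⟨⟨x, hx, hx'⟩, ⟨y, hy, hy'⟩⟩ := And.imp not_subset.mp not_subset.mp h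
  have hxy := hsides x hx y hy
  rcases x with u | _
  · exact hx' ⟨u, rfl⟩
  rcases y with _ | m
  · simp at hxy
  · exact hy' ⟨m, rfl⟩

end

theorem IsSeparated.card_le {n : ℕ} {S : Set (diamV ι n)} (hS : IsSeparated S)
    (hι : 2 ≤ Nat.card ι) : Nat.card S ≤ Nat.card ι := by
  have : Finite ι := Nat.finite_of_card_ne_zero (by omega)
  have : Nonempty ι := Finite.card_pos_iff.mp (by omega)
  induction n with
  | zero => exact (Finite.card_subtype_le (α := Bool) (· ∈ S)).trans (by simpa using hι)
  | succ n ih =>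
    rcases hS.subset_range_inl_or_subset_range_inr with hS' | hS'
    · obtain ⟨T, rfl⟩ := subset_range_iff_exists_image_eq.mp hS'
      exact (Nat.card_image_of_injective inl_injective T).trans_le (ih hS.of_image_inl)
    · obtain ⟨T, rfl⟩ := subset_range_iff_exists_image_eq.mp hS'
      refine (Nat.card_image_of_injective inr_injective T).trans_le ?_
      cases n with
      | zero =>
        -- all midpoints of `D_1` lie on the single edge of `D_0`
        exact Nat.card_le_card_of_injective (fun p : T => p.1.2)
          fun p q hpq => Subtype.ext (Prod.ext (Subsingleton.elim _ _) hpq)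
      | succ m =>
        choose a ha using exists_inl_mem (ι := ι) (n := m)
        obtain ⟨hinj, hsep⟩ := isSeparated_image_of_pairwise (ι := ι) (n := m + 1)
          (f := fun p : _ × ι => (inl (a p.1) : diamV ι (m + 1))) (T := T)
          fun p hp q hq hpq => two_pow_le_dist_inl_of_inr (ha p.1) (ha q.1)
            (hS (mem_image_of_mem _ hp) (mem_image_of_mem _ hq) (inr_injective.ne hpq))
        rw [← Nat.card_image_of_injOn hinj]
        exact ih hsep

end Diamond

theorem separated_set_in_diamond_card_le (k p : ℕ) (hk : 2 ≤ k)
    (S : Set (diamV (Fin k) p))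
    (hsep : ∀ x ∈ S, ∀ y ∈ S, x ≠ y → 2 ^ p ≤ (diamG (Fin k) p).dist x y) :
    Nat.card S ≤ k := by
  simpa using Diamond.IsSeparated.card_le (ι := Fin k) hsep (by simpa using hk)
end

section
/- Let v be a vertex of generation number d in D_{m,k} (1 ≤ d ≤ m). Then the closed ball of radius 2^{d−1} around v is exactly the union of the two subdiamonds of diameter 2^{d−1} that share v as their common top/bottom vertex. -/
/-!
Subdividing once doubles distances between old vertices, and the midpoint of a path replacing
the edge `ab` lies at distance `1 + 2 min (d a t) (d b t)` from an old vertex `t`: these values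
are attained by walks, and they change by at most one along an edge, which gives the lower bound.
The diamonds are bipartite, so adjacent vertices have distinct distances to `t`; hence the ball
of radius `2r` around `t` one generation later consists exactly of the vertices evolved from the
ball of radius `r`. The two subdiamonds through the midpoint evolve in the same way, and every
edge between them lies inside one of them, so the claim passes from `q` to `q + 1`. For `q = 0`
both sides are the midpoint and its two neighbours.
-/

open SimpleGraph

namespace SimpleGraph

variable {V : Type} {G : SimpleGraph V}

lemma Walk.le_add_length {f : V → ℕ} (hf : ∀ ⦃x y⦄, G.Adj x y → f x ≤ f y + 1) {x y : V}
    (p : G.Walk x y) : f x ≤ f y + p.length := by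
  induction p with
  | nil => simp
  | cons hxz _ ih =>
    have := hf hxz
    rw [Walk.length_cons]
    omega

lemma Reachable.le_add_dist {f : V → ℕ} (hf : ∀ ⦃x y⦄, G.Adj x y → f x ≤ f y + 1) {x y : V}
    (hr : G.Reachable x y) : f x ≤ f y + G.dist x y := by
  obtain ⟨p, hp⟩ := hr.exists_walk_length_eq_dist
  exact hp ▸ p.le_add_length hf

lemma Adj.dist_le_dist_add_one {a b : V} (hab : G.Adj a b) (t : V) :
    G.dist a t ≤ G.dist b t + 1 := by
  rw [dist_comm, dist_comm (u := b)]
  rcases hab.symm.diff_dist_adj (u := t) with h | h | h <;> omega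

lemma Colorable.dist_ne_of_adj (h2 : G.Colorable 2) (hG : G.Connected) {a b : V}
    (hab : G.Adj a b) (t : V) : G.dist a t ≠ G.dist b t := by
  obtain ⟨pa, hpa⟩ := hG.exists_walk_length_eq_dist a t
  obtain ⟨pb, hpb⟩ := hG.exists_walk_length_eq_dist b t
  obtain ⟨k, hk⟩ :=
    two_colorable_iff_forall_loop_even.mp h2 a ((Walk.cons hab pb).append pa.reverse)
  simp only [Walk.length_append, Walk.length_cons, Walk.length_reverse, hpa, hpb] at hk
  omega

end SimpleGraph

namespace diamondStep

variable {V W ι : Type} {G : SimpleGraph V} {H : SimpleGraph W}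

@[simp] lemma adj_inl_inr {a : V} {p : G.edgeSet × ι} :
    (diamondStep ι G).Adj (.inl a) (.inr p) ↔ a ∈ (p.1 : Sym2 V) := Iff.rfl

@[simp] lemma adj_inr_inl {a : V} {p : G.edgeSet × ι} :
    (diamondStep ι G).Adj (.inr p) (.inl a) ↔ a ∈ (p.1 : Sym2 V) := Iff.rfl

@[simp] lemma not_adj_inl_inl {a b : V} : ¬ (diamondStep ι G).Adj (.inl a) (.inl b) := id

@[simp] lemma not_adj_inr_inr {p p' : G.edgeSet × ι} :
    ¬ (diamondStep ι G).Adj (.inr p) (.inr p') := id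

lemma adj_inl_mk {a b : V} (hab : s(a, b) ∈ G.edgeSet) (i : ι) :
    (diamondStep ι G).Adj (.inl a) (.inr (⟨s(a, b), hab⟩, i)) := Sym2.mem_mk_left a b

lemma adj_mk_inl {a b : V} (hab : s(a, b) ∈ G.edgeSet) (i : ι) :
    (diamondStep ι G).Adj (.inr (⟨s(a, b), hab⟩, i)) (.inl b) := Sym2.mem_mk_right a b

lemma colorable_two : (diamondStep ι G).Colorable 2 :=
  (Coloring.mk (G := diamondStep ι G) Sum.isLeft fun {x y} hxy => by
    rcases x with _ | _ <;> rcases y with _ | _ <;> simp_all).colorable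

lemma exists_walk_inl_inl (i : ι) {a b : V} (p : G.Walk a b) :
    ∃ p' : (diamondStep ι G).Walk (.inl a) (.inl b), p'.length = 2 * p.length := by
  induction p with
  | nil => exact ⟨.nil, rfl⟩
  | @cons a c b hac _ ih =>
    obtain ⟨p', hp'⟩ := ih
    refine ⟨.cons (adj_inl_mk hac i) (.cons (adj_mk_inl hac i) p'), ?_⟩
    simp only [Walk.length_cons, hp']
    ring

lemma exists_adj_inl (p : G.edgeSet × ι) : ∃ c, (diamondStep ι G).Adj (.inr p) (.inl c) := by
  obtain ⟨⟨e, he⟩, i⟩ := p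
  induction e using Sym2.ind with
  | _ a b => exact ⟨a, Sym2.mem_mk_left a b⟩

theorem connected [Nonempty ι] (hG : G.Connected) : (diamondStep ι G).Connected := by
  have : Nonempty (V ⊕ (G.edgeSet × ι)) := ⟨.inl hG.nonempty.some⟩
  have reach_inl : ∀ x, ∃ c, (diamondStep ι G).Reachable x (.inl c) := by
    rintro (c | p)
    · exact ⟨c, .rfl⟩
    · obtain ⟨c, hc⟩ := exists_adj_inl p
      exact ⟨c, hc.reachable⟩
  refine .mk fun x y => ?_
  obtain ⟨c, hc⟩ := reach_inl x
  obtain ⟨d, hd⟩ := reach_inl y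
  obtain ⟨p⟩ := hG.preconnected c d
  obtain ⟨p', -⟩ := exists_walk_inl_inl (Classical.arbitrary ι) p
  exact hc.trans (p'.reachable.trans hd.symm)

noncomputable def distToInl (t : V) : V ⊕ (G.edgeSet × ι) → ℕ :=
  Sum.elim (fun y => 2 * G.dist y t) fun p =>
    1 + 2 * Sym2.lift ⟨fun a b => min (G.dist a t) (G.dist b t), fun _ _ => min_comm _ _⟩ p.1

@[simp] lemma distToInl_inl (t y : V) :
    distToInl (G := G) (ι := ι) t (.inl y) = 2 * G.dist y t := rfl

@[simp] lemma distToInl_inr_mk (t : V) {a b : V} (hab : s(a, b) ∈ G.edgeSet) (i : ι) :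
    distToInl t (.inr (⟨s(a, b), hab⟩, i)) = 1 + 2 * min (G.dist a t) (G.dist b t) := rfl

lemma distToInl_inl_inr_le_add_one (t : V) {c : V} {p : G.edgeSet × ι} (hc : c ∈ (p.1 : Sym2 V)) :
    distToInl t (.inl c : V ⊕ (G.edgeSet × ι)) ≤ distToInl t (.inr p) + 1 ∧
      distToInl t (.inr p) ≤ distToInl t (.inl c : V ⊕ (G.edgeSet × ι)) + 1 := by
  obtain ⟨⟨e, he⟩, i⟩ := p
  induction e using Sym2.ind with
  | _ a b =>
    have hab : G.Adj a b := he
    have := hab.dist_le_dist_add_one t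
    have := hab.symm.dist_le_dist_add_one t
    rcases Sym2.mem_iff.mp hc with rfl | rfl <;>
      simp only [distToInl_inl, distToInl_inr_mk] <;> omega

lemma distToInl_le_of_adj (t : V) ⦃x y : V ⊕ (G.edgeSet × ι)⦄ (hxy : (diamondStep ι G).Adj x y) :
    distToInl t x ≤ distToInl t y + 1 := by
  rcases x with c | p <;> rcases y with d | p'
  · exact absurd hxy not_adj_inl_inl
  · exact (distToInl_inl_inr_le_add_one t hxy).1
  · exact (distToInl_inl_inr_le_add_one t hxy).2
  · exact absurd hxy not_adj_inr_inr

theorem dist_inl_right [Nonempty ι] (hG : G.Connected) (x : V ⊕ (G.edgeSet × ι)) (t : V) :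
    (diamondStep ι G).dist x (.inl t) = distToInl t x := by
  have hle : ∀ y, (diamondStep ι G).dist (.inl y) (.inl t) ≤ 2 * G.dist y t := fun y => by
    obtain ⟨p, hp⟩ := hG.exists_walk_length_eq_dist y t
    obtain ⟨p', hp'⟩ := exists_walk_inl_inl (Classical.arbitrary ι) p
    exact hp ▸ hp' ▸ dist_le p'
  have hge : distToInl t x ≤ (diamondStep ι G).dist x (.inl t) := by
    simpa using ((connected hG).preconnected x (.inl t)).le_add_dist (distToInl_le_of_adj t)
  refine le_antisymm ?_ hge
  rcases x with y | ⟨⟨e, he⟩, i⟩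
  · exact hle y
  · induction e using Sym2.ind with
    | _ a b =>
      have hconn := connected (ι := ι) hG
      have ha := (hconn.dist_triangle (v := .inl a)).trans
        (add_le_add (dist_le (adj_inl_mk he i).symm.toWalk) (hle a))
      have hb := (hconn.dist_triangle (v := .inl b)).trans
        (add_le_add (dist_le (adj_mk_inl he i).toWalk) (hle b))
      simp only [Adj.length_toWalk] at ha hb
      rw [distToInl_inr_mk]
      omega

variable (ι G) in
/-- The vertex set of the subdivision of `G.induce S`, inside that of `G`. -/
def evolve (S : Set V) : Set (V ⊕ (G.edgeSet × ι)) :=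
  {x | Sum.elim (· ∈ S) (fun p => ∀ c ∈ (p.1 : Sym2 V), c ∈ S) x}

@[simp] lemma mem_evolve_inl {S : Set V} {y : V} :
    (.inl y : V ⊕ (G.edgeSet × ι)) ∈ evolve ι G S ↔ y ∈ S :=
  Iff.rfl

@[simp] lemma mem_evolve_inr {S : Set V} {p : G.edgeSet × ι} :
    .inr p ∈ evolve ι G S ↔ ∀ c ∈ (p.1 : Sym2 V), c ∈ S :=
  Iff.rfl

theorem setOf_dist_inl_le_two_mul [Nonempty ι] (hG : G.Connected) (h2 : G.Colorable 2) (t : V)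
    (r : ℕ) :
    {x | (diamondStep ι G).dist x (.inl t) ≤ 2 * r} = evolve ι G {y | G.dist y t ≤ r} := by
  ext (y | ⟨⟨e, he⟩, i⟩)
  · simp [dist_inl_right hG]
  · induction e using Sym2.ind with
    | _ a b =>
      have hab : G.Adj a b := he
      have := hab.dist_le_dist_add_one t
      have := hab.symm.dist_le_dist_add_one t
      have := h2.dist_ne_of_adj hG hab t
      simp only [Set.mem_ofPred_eq, dist_inl_right hG, distToInl_inr_mk, mem_evolve_inr,
        Sym2.mem_iff, forall_eq_or_imp, forall_eq]
      omega

theorem setOf_dist_inr_mk_le_one [Nonempty ι] (hG : G.Connected) {a b : V}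
    (hab : s(a, b) ∈ G.edgeSet) (i : ι) :
    {x | (diamondStep ι G).dist x (.inr (⟨s(a, b), hab⟩, i)) ≤ 1} =
      {.inl a, .inr (⟨s(a, b), hab⟩, i), .inl b} := by
  ext x
  have hle : (diamondStep ι G).dist x (.inr (⟨s(a, b), hab⟩, i)) ≤ 1 ↔
      x = .inr (⟨s(a, b), hab⟩, i) ∨ (diamondStep ι G).Adj x (.inr (⟨s(a, b), hab⟩, i)) := by
    rw [← (connected hG).dist_eq_zero_iff, ← dist_eq_one_iff_adj]
    omega
  rw [Set.mem_ofPred_eq, hle]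
  rcases x with c | p <;> simp [or_comm]

lemma evolve_union {A B : Set V} (hAB : ∀ a ∈ A, ∀ b ∈ B, G.Adj a b → a ∈ B ∨ b ∈ A) :
    evolve ι G (A ∪ B) = evolve ι G A ∪ evolve ι G B := by
  ext (y | ⟨⟨e, he⟩, i⟩)
  · simp
  · induction e using Sym2.ind with
    | _ a b =>
      have hab : G.Adj a b := he
      have := fun ha hb => hAB a ha b hb hab
      have := fun hb ha => hAB b hb a ha hab.symm
      simp only [mem_evolve_inr, Set.mem_union, Sym2.mem_iff, forall_eq_or_imp, forall_eq]
      tauto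

lemma evolve_separated (A B : Set V) :
    ∀ x ∈ evolve ι G A, ∀ y ∈ evolve ι G B, (diamondStep ι G).Adj x y →
      x ∈ evolve ι G B ∨ y ∈ evolve ι G A := by
  rintro (a | p) hx (b | p') hy hxy
  · exact absurd hxy not_adj_inl_inl
  · exact .inl (hy a hxy)
  · exact .inr (hx b hxy)
  · exact absurd hxy not_adj_inr_inr

variable (ι) in
def map (f : G →g H) : diamondStep ι G →g diamondStep ι H where
  toFun := Sum.map f fun p => (f.mapEdgeSet p.1, p.2)
  map_rel' := by
    rintro (a | p) (b | p') hab
    all_goals first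
      | exact absurd hab not_adj_inl_inl
      | exact absurd hab not_adj_inr_inr
      | exact Sym2.mem_map.mpr ⟨_, hab, rfl⟩

lemma map_injective {f : G →g H} (hf : Function.Injective f) :
    Function.Injective (map ι f) :=
  Sum.map_injective.mpr ⟨hf, (Hom.mapEdgeSet.injective f hf).prodMap Function.injective_id⟩

lemma map_adj_iff {f : G →g H} (hf : Function.Injective f) {x y : V ⊕ (G.edgeSet × ι)} :
    (diamondStep ι H).Adj (map ι f x) (map ι f y) ↔ (diamondStep ι G).Adj x y := by
  have mem_map_iff : ∀ {c : V} {e : Sym2 V}, f c ∈ Sym2.map f e ↔ c ∈ e := fun {c e} =>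
    Sym2.mem_map.trans ⟨fun ⟨_, hd, hdc⟩ => hf hdc ▸ hd, fun hc => ⟨c, hc, rfl⟩⟩
  rcases x with a | p <;> rcases y with b | p'
  · simp [map]
  · exact mem_map_iff
  · exact mem_map_iff
  · simp [map]

lemma range_map {f : G →g H} (hf : ∀ {a b}, H.Adj (f a) (f b) → G.Adj a b) :
    Set.range (map ι f) = evolve ι H (Set.range f) := by
  ext (y | ⟨⟨e, he⟩, i⟩)
  · simp [map]
  · induction e using Sym2.ind with
    | _ a b =>
      constructor
      · rintro ⟨a' | ⟨e', i'⟩, hx⟩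
        · simp [map] at hx
        · intro c hc
          have he' : Sym2.map f e'.1 = s(a, b) :=
            congrArg Subtype.val (Prod.ext_iff.mp (Sum.inr_injective hx)).1
          obtain ⟨d, -, rfl⟩ := Sym2.mem_map.mp (he'.symm ▸ hc : c ∈ Sym2.map f e'.1)
          exact ⟨d, rfl⟩
      · intro hends
        obtain ⟨a', rfl⟩ := hends a (Sym2.mem_mk_left a b)
        obtain ⟨b', rfl⟩ := hends b (Sym2.mem_mk_right _ b)
        exact ⟨.inr (⟨s(a', b'), hf he⟩, i), rfl⟩

end diamondStep

section Diamond

variable (ι : Type)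

theorem diamG_connected [Nonempty ι] : ∀ m, (diamG ι m).Connected
  | 0 => connected_top (V := Bool)
  | m + 1 => diamondStep.connected (diamG_connected m)

theorem diamG_colorable_two : ∀ m, (diamG ι m).Colorable 2
  | 0 => colorable_of_fintype (⊤ : SimpleGraph Bool)
  | _ + 1 => diamondStep.colorable_two

variable {ι} {j : ℕ} {u v : diamV ι j} (h : (diamG ι j).Adj u v)

lemma range_subEmbed_zero : Set.range (subEmbed ι h 0) = {u, v} := by
  ext x
  change (∃ b : Bool, subEmbed ι h 0 b = x) ↔ x = u ∨ x = v
  rw [Bool.exists_bool]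
  exact or_comm.trans (or_congr eq_comm eq_comm)

theorem subEmbed_injective : ∀ q, Function.Injective (subEmbed ι h q)
  | 0 => by
    rintro (_ | _) (_ | _) hab
    exacts [rfl, absurd hab h.ne', absurd hab h.ne, rfl]
  | q + 1 => diamondStep.map_injective (subEmbed_injective q)

theorem subEmbed_adj_iff : ∀ q {a b : diamV ι q},
    (diamG ι (j + q)).Adj (subEmbed ι h q a) (subEmbed ι h q b) ↔ (diamG ι q).Adj a b
  | 0, a, b => by
    change (diamG ι j).Adj (bif a then u else v) (bif b then u else v) ↔ @Ne Bool a b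
    cases a <;> cases b <;> simp [h, h.symm]
  | q + 1, _, _ => diamondStep.map_adj_iff (subEmbed_injective h q)

lemma range_subEmbed_succ (q : ℕ) :
    Set.range (subEmbed ι h (q + 1)) =
      diamondStep.evolve ι (diamG ι (j + q)) (Set.range (subEmbed ι h q)) :=
  diamondStep.range_map (subEmbed_adj_iff h q).mp

end Diamond

section DiamondMid

variable {ι : Type} {j : ℕ} {u v : diamV ι j} (h : (diamG ι j).Adj u v) (i : ι)

lemma setOf_dist_diamMid_le_one :
    {x | (diamG ι (j + 1)).dist x (diamMid ι h i) ≤ 1} =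
      Set.range (subEmbed ι (diamMid_adj_left ι h i) 0) ∪
        Set.range (subEmbed ι (diamMid_adj_right ι h i) 0) := by
  have : Nonempty ι := ⟨i⟩
  rw [range_subEmbed_zero (diamMid_adj_left ι h i), range_subEmbed_zero (diamMid_adj_right ι h i)]
  refine (diamondStep.setOf_dist_inr_mk_le_one (diamG_connected ι j) _ i).trans ?_
  ext x
  change _ ↔ x ∈ ({_, _} ∪ {_, _} : Set (diamV ι j ⊕ ((diamG ι j).edgeSet × ι)))
  simp only [diamMid, Set.mem_insert_iff, Set.mem_singleton_iff, Set.mem_union]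
  tauto

lemma range_subEmbed_diamMid_separated : ∀ q,
    ∀ a ∈ Set.range (subEmbed ι (diamMid_adj_left ι h i) q),
    ∀ b ∈ Set.range (subEmbed ι (diamMid_adj_right ι h i) q),
      (diamG ι (j + 1 + q)).Adj a b →
        a ∈ Set.range (subEmbed ι (diamMid_adj_right ι h i) q) ∨
          b ∈ Set.range (subEmbed ι (diamMid_adj_left ι h i) q)
  | 0 => by
    rw [range_subEmbed_zero (diamMid_adj_left ι h i), range_subEmbed_zero (diamMid_adj_right ι h i)]
    rintro a (rfl | rfl) b (rfl | rfl) hab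
    · exact .inr (.inr rfl)
    · exact absurd hab diamondStep.not_adj_inl_inl
    all_goals exact .inl (.inl rfl)
  | q + 1 => by
    rw [range_subEmbed_succ (diamMid_adj_left ι h i), range_subEmbed_succ (diamMid_adj_right ι h i)]
    exact diamondStep.evolve_separated _ _

end DiamondMid

theorem ball_around_generation_vertex_general (ι : Type) {j : ℕ}
    {u v : diamV ι j} (h : (diamG ι j).Adj u v) (i : ι) (q : ℕ) :
    {x : diamV ι (j + 1 + q) |
        (diamG ι (j + 1 + q)).dist x (diamLift ι (j + 1) q (diamMid ι h i)) ≤ 2 ^ q} =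
      Set.range (subEmbed ι (diamMid_adj_left ι h i) q) ∪
        Set.range (subEmbed ι (diamMid_adj_right ι h i) q) := by
  have : Nonempty ι := ⟨i⟩
  induction q with
  | zero => exact setOf_dist_diamMid_le_one h i
  | succ q ih =>
    calc _ = diamondStep.evolve ι (diamG ι (j + 1 + q))
          {y | (diamG ι (j + 1 + q)).dist y (diamLift ι (j + 1) q (diamMid ι h i)) ≤ 2 ^ q} := by
          rw [pow_succ']
          exact diamondStep.setOf_dist_inl_le_two_mul (diamG_connected ι _)
            (diamG_colorable_two ι _) _ _
      _ = _ := by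
        rw [ih, diamondStep.evolve_union (range_subEmbed_diamMid_separated h i q),
          range_subEmbed_succ (diamMid_adj_left ι h i),
          range_subEmbed_succ (diamMid_adj_right ι h i)]
        rfl

theorem ball_around_generation_vertex (ι : Type) [Nontrivial ι] {j : ℕ}
    {u v : diamV ι j} (h : (diamG ι j).Adj u v) (i : ι) (q : ℕ) :
    {x : diamV ι (j + 1 + q) |
        (diamG ι (j + 1 + q)).dist x (diamLift ι (j + 1) q (diamMid ι h i)) ≤ 2 ^ q} =
      Set.range (subEmbed ι (diamMid_adj_left ι h i) q) ∪
        Set.range (subEmbed ι (diamMid_adj_right ι h i) q) :=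
  ball_around_generation_vertex_general ι h i q
end
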